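/- arXiv:2304.07351 — 2 statements merged into one kernel-verified Lean document; each statement's English description precedes it below -/
import Mathlib

section
/- Let $F$ be a field, let $n \ge 3$, let $1 \le i \le n-2$, and let $z_1,\dots,z_{n+1} \in F$ be pairwise distinct. Then the Kleiss-Kuijf relation holds: $\sum_{\gamma \in (1,\dots,i) \,\shuffle\, (i+1,\dots,n-1)} \mathrm{PT}(n+1,\gamma_1,\dots,\gamma_{n-1},n) = (-1)^{n-i+1}\, \mathrm{PT}(n+1,1,\dots,i,n,n-1,n-2,\dots,i+1)$, where the sum runs over all shuffles $\gamma$ of the ordered lists $(1,\dots,i)$ and $(i+1,\dots,n-1)$. -/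
/-!
Cutting the cycle `PT(a, γ, b)` at its edge `b → a` writes it as `Φ(a; γ; b) · (z_b - z_a)⁻¹`,
where `Φ(a; γ; b)` is the product of `(z_u - z_v)⁻¹` along the open path `a, γ, b`. Shuffle sums
of open paths factor:
`∑_{γ ∈ α ⧢ β} Φ(a; γ; b) = (z_a - z_b) · Φ(a; α; b) · Φ(a; β; b)`,
by induction on `α` and `β`, splitting on the first letter of `γ`; the inductive step is the
three-point partial-fraction identity. On the other side `PT(a, α, b, βᵀ) = Φ(a; α; b) · Φ(b; βᵀ; a)`,
and reversing a path through `k` inner points costs the sign `(-1)^(k+1)`.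
-/

/-- The Parke-Taylor factor of a list of labels `l`, with points `z`:
`∏ m, (z l_m - z l_{m+1})⁻¹`, indices read cyclically. -/
noncomputable def PTl {F : Type*} [Field F] (z : ℕ → F) (l : List ℕ) : F :=
  ∏ m : Fin l.length, (z (l.get m) - z (l.get (finRotate l.length m)))⁻¹

section PathFactor

variable {ι F : Type*} [Field F]

/-- `pathFactor z a b [l₁, …, lₖ]` is the product of `(z u - z v)⁻¹` over the consecutive
pairs `u, v` of the open path `a, l₁, …, lₖ, b`. -/
noncomputable def pathFactor (z : ι → F) : ι → ι → List ι → F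
  | a, b, [] => (z a - z b)⁻¹
  | a, b, p :: l => (z a - z p)⁻¹ * pathFactor z p b l

@[simp] lemma pathFactor_nil (z : ι → F) (a b : ι) : pathFactor z a b [] = (z a - z b)⁻¹ := rfl

@[simp] lemma pathFactor_cons (z : ι → F) (a b p : ι) (l : List ι) :
    pathFactor z a b (p :: l) = (z a - z p)⁻¹ * pathFactor z p b l := rfl

lemma pathFactor_append_cons (z : ι → F) (a b p : ι) (l m : List ι) :
    pathFactor z a b (l ++ p :: m) = pathFactor z a p l * pathFactor z p b m := by
  induction l generalizing a with
  | nil => simp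
  | cons q l ih => simp [ih, mul_assoc]

lemma pathFactor_concat (z : ι → F) (a b p : ι) (l : List ι) :
    pathFactor z a b (l ++ [p]) = pathFactor z a p l * (z p - z b)⁻¹ :=
  pathFactor_append_cons z a b p l []

lemma pathFactor_reverse (z : ι → F) (a b : ι) (l : List ι) :
    pathFactor z b a l.reverse = (-1) ^ (l.length + 1) * pathFactor z a b l := by
  induction l generalizing a with
  | nil =>
    simp only [List.reverse_nil, pathFactor_nil, List.length_nil]
    rw [← neg_sub (z a), inv_neg]
    ring
  | cons q l ih =>
    simp only [List.reverse_cons, pathFactor_concat, ih, pathFactor_cons, List.length_cons,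
      ← neg_sub (z a) (z q), inv_neg]
    ring

lemma pathFactor_eq_prod_zipWith (z : ι → F) (a b : ι) (l : List ι) :
    pathFactor z a b l = (List.zipWith (fun u v => (z u - z v)⁻¹) (a :: l) (l ++ [b])).prod := by
  induction l generalizing a with
  | nil => simp
  | cons p l ih => simp [ih]

end PathFactor

lemma PTl_cons {F : Type*} [Field F] (z : ℕ → F) (a : ℕ) (l : List ℕ) :
    PTl z (a :: l) = pathFactor z a a l := by
  rw [PTl, ← List.prod_ofFn, pathFactor_eq_prod_zipWith, ← List.rotate_zero (l ++ [a]),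
    ← List.rotate_cons_succ]
  congr 1
  apply List.ext_getElem (by simp)
  intro k _ _
  simp only [List.getElem_ofFn, List.getElem_zipWith, List.get_eq_getElem]
  rw [List.getElem_rotate]
  refine congrArg (fun x => (z _ - z x)⁻¹) (getElem_congr rfl ?_ _)
  simp only [List.length_cons, finRotate_apply, Fin.val_add, Fin.val_one', Nat.add_mod_mod]

lemma PTl_cons_concat {F : Type*} [Field F] (z : ℕ → F) (a b : ℕ) (l : List ℕ) :
    PTl z (a :: (l ++ [b])) = pathFactor z a b l * (z b - z a)⁻¹ := by
  rw [PTl_cons, pathFactor_concat]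

section Shuffles

variable {ι : Type*} [DecidableEq ι]

/-- Shuffles of `α` and `β`, encoded as the rearrangements of `α ++ β` that contain both `α` and
`β` as sublists; for lists without repetitions these are exactly the interleavings. -/
def shuffles (α β : List ι) : Finset (List ι) :=
  (α ++ β).permutations.toFinset.filter (fun γ => α.Sublist γ ∧ β.Sublist γ)

lemma mem_shuffles {α β γ : List ι} :
    γ ∈ shuffles α β ↔ γ.Perm (α ++ β) ∧ α.Sublist γ ∧ β.Sublist γ := by
  simp [shuffles, List.mem_permutations]

lemma shuffles_nil_left (β : List ι) : shuffles [] β = {β} := by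
  ext γ
  rw [mem_shuffles, Finset.mem_singleton]
  constructor
  · rintro ⟨hperm, -, hsub⟩
    exact (hsub.eq_of_length hperm.length_eq.symm).symm
  · rintro rfl
    exact ⟨by simp, List.nil_sublist _, List.Sublist.refl _⟩

lemma shuffles_nil_right (α : List ι) : shuffles α [] = {α} := by
  ext γ
  rw [mem_shuffles, Finset.mem_singleton]
  constructor
  · rintro ⟨hperm, hsub, -⟩
    exact (hsub.eq_of_length (by simpa using hperm.length_eq.symm)).symm
  · rintro rfl
    exact ⟨by simp, List.Sublist.refl _, List.nil_sublist _⟩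

lemma eq_of_cons_sublist_of_nodup {p h : ι} {α γ : List ι} (hsub : (p :: α).Sublist (h :: γ))
    (hnd : (h :: γ).Nodup) (hmem : h ∈ p :: α) : h = p := by
  by_contra hne
  exact (List.nodup_cons.mp hnd).1 ((hsub.of_cons_of_ne (Ne.symm hne)).subset hmem)

lemma shuffles_cons_cons {p q : ι} {α β : List ι} (hnd : (p :: α ++ q :: β).Nodup) :
    shuffles (p :: α) (q :: β) =
      (shuffles α (q :: β)).image (p :: ·) ∪ (shuffles (p :: α) β).image (q :: ·) := by
  have hpq : p ≠ q := fun h => (List.nodup_cons.mp hnd).1 (by simp [h])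
  ext γ
  simp only [Finset.mem_union, Finset.mem_image, mem_shuffles]
  constructor
  · rintro ⟨hperm, hsubα, hsubβ⟩
    obtain _ | ⟨h, γ⟩ := γ
    · simpa using hperm.length_eq
    have hγnd : (h :: γ).Nodup := hperm.nodup_iff.mpr hnd
    rcases List.mem_append.mp (hperm.subset List.mem_cons_self) with hα | hβ
    · obtain rfl := eq_of_cons_sublist_of_nodup hsubα hγnd hα
      exact .inl ⟨γ, ⟨hperm.cons_inv, List.cons_sublist_cons.mp hsubα,
        hsubβ.of_cons_of_ne hpq.symm⟩, rfl⟩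
    · obtain rfl := eq_of_cons_sublist_of_nodup hsubβ hγnd hβ
      exact .inr ⟨γ, ⟨(hperm.trans List.perm_middle).cons_inv, hsubα.of_cons_of_ne hpq,
        List.cons_sublist_cons.mp hsubβ⟩, rfl⟩
  · rintro (⟨γ, ⟨hperm, hsubα, hsubβ⟩, rfl⟩ | ⟨γ, ⟨hperm, hsubα, hsubβ⟩, rfl⟩)
    · exact ⟨hperm.cons p, List.cons_sublist_cons.mpr hsubα, hsubβ.cons p⟩
    · exact ⟨(hperm.cons q).trans List.perm_middle.symm, hsubα.cons q,
        List.cons_sublist_cons.mpr hsubβ⟩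

end Shuffles

lemma partial_fraction_three_points {F : Type*} [Field F] {a p q : F} (b : F) (hap : a ≠ p)
    (haq : a ≠ q) (hpq : p ≠ q) :
    (p - b) * (a - p)⁻¹ * (p - q)⁻¹ + (q - b) * (a - q)⁻¹ * (q - p)⁻¹ =
      (a - b) * (a - p)⁻¹ * (a - q)⁻¹ := by
  have := sub_ne_zero.mpr hap
  have := sub_ne_zero.mpr haq
  have := sub_ne_zero.mpr hpq
  have := sub_ne_zero.mpr hpq.symm
  field_simp
  ring

lemma ne_of_nodup_map_cons {ι F : Type*} {z : ι → F} {a x : ι} {l : List ι}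
    (hnd : ((a :: l).map z).Nodup) (hx : x ∈ l) : z a ≠ z x := fun h =>
  (List.nodup_cons.mp hnd).1 (by rw [h]; exact List.mem_map_of_mem hx)

lemma sum_shuffles_pathFactor {ι F : Type*} [DecidableEq ι] [Field F] (z : ι → F) (a b : ι)
    (α β : List ι) (hnd : ((a :: b :: (α ++ β)).map z).Nodup) :
    ∑ γ ∈ shuffles α β, pathFactor z a b γ =
      (z a - z b) * pathFactor z a b α * pathFactor z a b β := by
  induction α generalizing β a with
  | nil =>
    have hab : z a - z b ≠ 0 := sub_ne_zero.mpr (ne_of_nodup_map_cons hnd (by simp))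
    rw [shuffles_nil_left, Finset.sum_singleton, pathFactor_nil, mul_inv_cancel₀ hab, one_mul]
  | cons p α ihα =>
    induction β generalizing a with
    | nil =>
      have hab : z a - z b ≠ 0 := sub_ne_zero.mpr (ne_of_nodup_map_cons hnd (by simp))
      rw [shuffles_nil_right, Finset.sum_singleton, pathFactor_nil, mul_right_comm,
        mul_inv_cancel₀ hab, one_mul]
    | cons q β ihβ =>
      have hap : z a ≠ z p := ne_of_nodup_map_cons hnd (by simp)
      have haq : z a ≠ z q := ne_of_nodup_map_cons hnd (by simp)
      have hpq : z p ≠ z q := ne_of_nodup_map_cons hnd.of_cons.of_cons (by simp)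
      have hndp : ((p :: b :: (α ++ q :: β)).map z).Nodup :=
        ((List.Perm.swap p b _).map z).nodup_iff.mp hnd.of_cons
      have hndq : ((q :: b :: (p :: α ++ β)).map z).Nodup :=
        (((List.perm_middle.cons b).trans (List.Perm.swap q b _)).map z).nodup_iff.mp hnd.of_cons
      have hdisj : Disjoint ((shuffles α (q :: β)).image (p :: ·))
          ((shuffles (p :: α) β).image (q :: ·)) := by
        simp [Finset.disjoint_left, (ne_of_apply_ne z hpq).symm]
      rw [shuffles_cons_cons (hnd.of_map.of_cons.of_cons), Finset.sum_union hdisj,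
        Finset.sum_image fun _ _ _ _ h => List.cons_injective h,
        Finset.sum_image fun _ _ _ _ h => List.cons_injective h]
      simp only [pathFactor_cons, ← Finset.mul_sum]
      rw [ihα _ _ hndp, ihβ _ hndq]
      simp only [pathFactor_cons]
      linear_combination (pathFactor z p b α * pathFactor z q b β) *
        partial_fraction_three_points (z b) hap haq hpq

lemma sum_shuffles_PTl {F : Type*} [Field F] (z : ℕ → F) (a b : ℕ) (α β : List ℕ)
    (hnd : ((a :: b :: (α ++ β)).map z).Nodup) :
    ∑ γ ∈ shuffles α β, PTl z (a :: (γ ++ [b])) =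
      (-1) ^ β.length * PTl z (a :: (α ++ b :: β.reverse)) := by
  have hab : z a - z b ≠ 0 := sub_ne_zero.mpr (ne_of_nodup_map_cons hnd (by simp))
  simp_rw [PTl_cons_concat]
  rw [← Finset.sum_mul, sum_shuffles_pathFactor z a b α β hnd, PTl_cons, pathFactor_append_cons,
    pathFactor_reverse, ← neg_sub (z a) (z b), inv_neg]
  have hsq : (-1 : F) ^ (β.length * 2) = 1 := by rw [pow_mul', neg_one_sq, one_pow]
  linear_combination (-pathFactor z a b α * pathFactor z a b β) * mul_inv_cancel₀ hab +
    pathFactor z a b α * pathFactor z a b β * hsq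

theorem stmt2_general {F : Type*} [Field F] (n i : ℕ) (hn : 3 ≤ n) (hi2 : i ≤ n - 2)
    (z : ℕ → F)
    (hz : ∀ a ∈ Finset.Icc 1 (n + 1), ∀ b ∈ Finset.Icc 1 (n + 1), z a = z b → a = b) :
    ∑ γ ∈ (List.range' 1 i ++ List.range' (i + 1) (n - 1 - i)).permutations.toFinset.filter
        (fun γ => List.Sublist (List.range' 1 i) γ ∧
          List.Sublist (List.range' (i + 1) (n - 1 - i)) γ),
      PTl z ([n + 1] ++ γ ++ [n]) =
    (-1 : F) ^ (n - i + 1) *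
      PTl z ([n + 1] ++ List.range' 1 i ++ [n] ++ (List.range' (i + 1) (n - 1 - i)).reverse) := by
  have hrange : List.range' 1 i ++ List.range' (i + 1) (n - 1 - i) = List.range' 1 (n - 1) := by
    rw [add_comm i 1, List.range'_append_1]
    congr 1
    omega
  have hmem : ∀ x ∈ (n + 1) :: n :: List.range' 1 (n - 1), x ∈ Finset.Icc 1 (n + 1) := by
    intro x hx
    simp only [List.mem_cons, List.mem_range'_1, Finset.mem_Icc] at hx ⊢
    omega
  have hnd : (((n + 1) :: n :: List.range' 1 (n - 1)).map z).Nodup :=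
    List.Nodup.map_on (fun x hx y hy => hz x (hmem x hx) y (hmem y hy))
      (by simp [List.nodup_range']; omega)
  have hsign : (-1 : F) ^ (n - i + 1) = (-1) ^ (n - 1 - i) := by
    rw [show n - i + 1 = n - 1 - i + 2 by omega, pow_add, neg_one_sq, mul_one]
  have hkk := sum_shuffles_PTl z (n + 1) n (List.range' 1 i) (List.range' (i + 1) (n - 1 - i))
    (hrange ▸ hnd)
  show ∑ γ ∈ shuffles _ _, _ = _
  rw [List.length_range'] at hkk
  rw [hsign]
  simpa only [List.singleton_append, List.cons_append, List.nil_append, List.append_assoc] using hkk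

/-- The Kleiss-Kuijf relation: summing `PT(n+1, γ, n)` over all shuffles `γ` of the
ordered lists `(1, …, i)` and `(i+1, …, n-1)` gives
`(-1)^(n-i+1) PT(n+1, 1, …, i, n, n-1, …, i+1)`. -/
theorem stmt2 {F : Type*} [Field F] (n i : ℕ) (hn : 3 ≤ n) (hi1 : 1 ≤ i) (hi2 : i ≤ n - 2)
    (z : ℕ → F)
    (hz : ∀ a ∈ Finset.Icc 1 (n + 1), ∀ b ∈ Finset.Icc 1 (n + 1), z a = z b → a = b) :
    ∑ γ ∈ (List.range' 1 i ++ List.range' (i + 1) (n - 1 - i)).permutations.toFinset.filter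
        (fun γ => List.Sublist (List.range' 1 i) γ ∧
          List.Sublist (List.range' (i + 1) (n - 1 - i)) γ),
      PTl z ([n + 1] ++ γ ++ [n]) =
    (-1 : F) ^ (n - i + 1) *
      PTl z ([n + 1] ++ List.range' 1 i ++ [n] ++ (List.range' (i + 1) (n - 1 - i)).reverse) :=
  stmt2_general n i hn hi2 z hz
end

section
/- Let $F$ be a field and $v_1,\dots,v_5 \in F^3$ such that all $3\times 3$ determinants $\Delta_{abc} = \det(v_a,v_b,v_c)$ for distinct $a,b,c \in \{1,\dots,5\}$ are nonzero. Then the six-term $(3,5)$ partitioning decoupling identity holds: $\mathrm{PT}^{(3)}(1,2,3,4,5) + \mathrm{PT}^{(3)}(1,2,4,5,3) + \mathrm{PT}^{(3)}(1,2,5,3,4) - \mathrm{PT}^{(3)}(1,3,2,4,5) + \mathrm{PT}^{(3)}(1,3,4,2,5) + \mathrm{PT}^{(3)}(1,3,5,2,4) = 0$. -/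
/-!
Once every `Δ_{abc}` is written with increasing indices, the six Parke-Taylor factors share the
denominator `∏_{a<b<c} Δ_{abc}`, since each cyclic order uses five of the ten triples and the
numerator of each term is (up to sign) the product of the other five. The resulting degree-five
numerator lies in the ideal generated by the three-term Plücker relations
`Δ_{abc} Δ_{ade} - Δ_{abd} Δ_{ace} + Δ_{abe} Δ_{acd} = 0`, which hold for any five vectors in `F³`.
-/

/-- `Δ_{abc}`: the determinant of the `3 × 3` matrix whose columns are `v a`, `v b`, `v c`. -/
def Δ3 {F : Type*} [Field F] {N : ℕ} (v : Fin N → Fin 3 → F) (a b c : Fin N) : F :=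
  Matrix.det (Matrix.of fun i j => ![v a, v b, v c] j i)

/-- The `k = 3` Parke-Taylor factor
`PT^(3)(a₁,…,a₅) = (Δ_{a₁a₂a₃} Δ_{a₂a₃a₄} Δ_{a₃a₄a₅} Δ_{a₄a₅a₁} Δ_{a₅a₁a₂})⁻¹`. -/
noncomputable def PT3 {F : Type*} [Field F] (v : Fin 5 → Fin 3 → F)
    (a1 a2 a3 a4 a5 : Fin 5) : F :=
  (Δ3 v a1 a2 a3 * Δ3 v a2 a3 a4 * Δ3 v a3 a4 a5 * Δ3 v a4 a5 a1 * Δ3 v a5 a1 a2)⁻¹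

section Δ3

variable {F : Type*} [Field F] {N : ℕ} (v : Fin N → Fin 3 → F)

lemma Δ3_eq (a b c : Fin N) :
    Δ3 v a b c = v a 0 * (v b 1 * v c 2 - v b 2 * v c 1) - v b 0 * (v a 1 * v c 2 - v a 2 * v c 1)
      + v c 0 * (v a 1 * v b 2 - v a 2 * v b 1) := by
  simp only [Δ3, Matrix.det_fin_three, Matrix.of_apply, Matrix.cons_val_zero, Matrix.cons_val_one,
    Matrix.cons_val]
  ring

lemma Δ3_swap_left (a b c : Fin N) : Δ3 v b a c = -Δ3 v a b c := by
  simp only [Δ3_eq]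
  ring

lemma Δ3_swap_right (a b c : Fin N) : Δ3 v a c b = -Δ3 v a b c := by
  simp only [Δ3_eq]
  ring

lemma Δ3_rotate (a b c : Fin N) : Δ3 v b c a = Δ3 v a b c := by
  simp only [Δ3_eq]
  ring

lemma Δ3_plucker (a b c d e : Fin N) :
    Δ3 v a b c * Δ3 v a d e - Δ3 v a b d * Δ3 v a c e + Δ3 v a b e * Δ3 v a c d = 0 := by
  simp only [Δ3_eq]
  ring

end Δ3

/-- Labels `1, …, 5` of the informal statement are `0, …, 4` here. -/
theorem stmt11 {F : Type*} [Field F] (v : Fin 5 → Fin 3 → F)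
    (hΔ : ∀ a b c : Fin 5, a ≠ b → a ≠ c → b ≠ c → Δ3 v a b c ≠ 0) :
    PT3 v 0 1 2 3 4 + PT3 v 0 1 3 4 2 + PT3 v 0 1 4 2 3 -
      PT3 v 0 2 1 3 4 + PT3 v 0 2 3 1 4 + PT3 v 0 2 4 1 3 = 0 := by
  -- The other four indices are listed in cyclic order after the shared one, so every triple below
  -- is a rotation of an increasing one.
  have pl0 := Δ3_plucker v 0 1 2 3 4
  have pl1 := Δ3_plucker v 1 2 3 4 0
  have pl2 := Δ3_plucker v 2 3 4 0 1
  have pl3 := Δ3_plucker v 3 4 0 1 2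
  -- `simp` uses `Δ3_rotate` as a permutation rule, turning each triple into its increasing
  -- rotation; the five odd triples of the goal are flipped by hand.
  simp only [PT3, Δ3_rotate, Δ3_swap_right v 0 1 2, Δ3_swap_right v 0 2 4, Δ3_swap_right v 1 2 4,
    Δ3_swap_left v 1 2 3, Δ3_swap_left v 1 3 4] at pl1 pl2 pl3 ⊢
  field_simp [hΔ]
  linear_combination
    (-(Δ3 v 0 2 3 * Δ3 v 1 2 4 * Δ3 v 1 3 4) - Δ3 v 0 1 4 * Δ3 v 1 2 3 * Δ3 v 2 3 4) * pl0
    + (Δ3 v 0 1 4 * Δ3 v 0 2 3 * Δ3 v 2 3 4 + Δ3 v 0 1 2 * Δ3 v 0 3 4 * Δ3 v 2 3 4) * pl1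
    + (Δ3 v 0 1 4 * Δ3 v 0 3 4 * Δ3 v 1 2 3 - Δ3 v 0 1 4 * Δ3 v 0 2 3 * Δ3 v 1 3 4
      - Δ3 v 0 1 2 * Δ3 v 0 3 4 * Δ3 v 1 3 4) * pl2
    - Δ3 v 0 1 4 * Δ3 v 0 2 4 * Δ3 v 1 2 3 * pl3
end
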